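/- Let δ ∈ [0, 1/2). For the certification of the measurement in the Hadamard basis, i.e. null hypothesis e₀ and alternative hypothesis H·e₀ = (e₀ + e₁)/√2, the minimum of |⟨ω, H·e₀⟩|² over all unit vectors ω ∈ ℂ² with |⟨e₀, ω⟩|² ≥ 1 − δ equals (1/2)·(√(1−δ) − √δ)². -/

import Mathlib

/-!
Since `H e₀ = (1, 1)/√2`, the type II error of `ω` is `|ω₀ + ω₁|² / 2`. Significance `δ` forces
`|ω₀| ≥ √(1 - δ)`, hence `|ω₁| ≤ √δ`, so by the reverse triangle inequality
`|ω₀ + ω₁| ≥ √(1 - δ) - √δ`, which is nonnegative for `δ ≤ 1/2`. The real vector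
`(√(1 - δ), -√δ)` attains the bound.
-/

open scoped InnerProductSpace Matrix

noncomputable def e : Fin 2 → EuclideanSpace ℂ (Fin 2) := fun i => EuclideanSpace.single i 1

noncomputable def Hmat : Matrix (Fin 2) (Fin 2) ℂ :=
  ((1 / Real.sqrt 2 : ℝ) : ℂ) • !![1, 1; 1, -1]

lemma norm_sq_fin_two {𝕜 : Type*} [RCLike 𝕜] (ω : EuclideanSpace 𝕜 (Fin 2)) :
    ‖ω‖ ^ 2 = ‖ω 0‖ ^ 2 + ‖ω 1‖ ^ 2 := by
  rw [EuclideanSpace.norm_sq_eq, Fin.sum_univ_two]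

lemma inner_e_zero_left (ω : EuclideanSpace ℂ (Fin 2)) : ⟪e 0, ω⟫_ℂ = ω 0 := by
  simp [e, EuclideanSpace.inner_single_left]

lemma Hmat_mulVec_e_zero : Hmat *ᵥ e 0 = fun _ => ((1 / Real.sqrt 2 : ℝ) : ℂ) := by
  ext i
  fin_cases i <;> simp [Hmat, e, Matrix.mulVec, dotProduct]

lemma norm_inner_hadamard_sq (ω : EuclideanSpace ℂ (Fin 2)) :
    ‖⟪ω, (WithLp.toLp 2 (Hmat *ᵥ e 0) : EuclideanSpace ℂ (Fin 2))⟫_ℂ‖ ^ 2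
      = ‖ω 0 + ω 1‖ ^ 2 / 2 := by
  have hinner : ⟪ω, (WithLp.toLp 2 (Hmat *ᵥ e 0) : EuclideanSpace ℂ (Fin 2))⟫_ℂ
      = ((1 / Real.sqrt 2 : ℝ) : ℂ) * starRingEnd ℂ (ω 0 + ω 1) := by
    simp only [PiLp.inner_apply, Hmat_mulVec_e_zero, Fin.sum_univ_two, RCLike.inner_apply, map_add]
    ring
  rw [hinner, norm_mul, mul_pow, Complex.norm_conj, Complex.norm_real,
    Real.norm_of_nonneg (by positivity), div_pow, Real.sq_sqrt zero_le_two]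
  ring

lemma sqrt_sub_sqrt_le_norm_add {E : Type*} [SeminormedAddCommGroup E] {x y : E} {δ : ℝ}
    (hxy : ‖x‖ ^ 2 + ‖y‖ ^ 2 = 1) (hx : 1 - δ ≤ ‖x‖ ^ 2) :
    √(1 - δ) - √δ ≤ ‖x + y‖ := by
  have hx' : √(1 - δ) ≤ ‖x‖ := (Real.sqrt_le_left (norm_nonneg x)).2 hx
  have hy' : ‖y‖ ≤ √δ := Real.le_sqrt_of_sq_le (by linarith)
  linarith [norm_sub_le_norm_add x y]

theorem stmt17 (δ : ℝ) (hδ : δ ∈ Set.Ico (0:ℝ) (1 / 2)) :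
    IsLeast
      {t : ℝ | ∃ ω : EuclideanSpace ℂ (Fin 2), ‖ω‖ = 1 ∧
        ‖⟪e 0, ω⟫_ℂ‖ ^ 2 ≥ 1 - δ ∧
        t = ‖⟪ω, (WithLp.toLp 2 (Hmat.mulVec (e 0)) : EuclideanSpace ℂ (Fin 2))⟫_ℂ‖ ^ 2}
      ((1 / 2) * (Real.sqrt (1 - δ) - Real.sqrt δ) ^ 2) := by
  obtain ⟨hδ₀, hδ₁⟩ := hδ
  have hsq₀ : √(1 - δ) ^ 2 = 1 - δ := Real.sq_sqrt (by linarith)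
  have hsq₁ : √δ ^ 2 = δ := Real.sq_sqrt hδ₀
  constructor
  · set ω : EuclideanSpace ℂ (Fin 2) := !₂[(√(1 - δ) : ℂ), -(√δ : ℂ)]
    have hω₀ : ‖ω 0‖ = √(1 - δ) := by simp [ω]
    have hω₁ : ‖ω 1‖ = √δ := by simp [ω]
    have hω : ω 0 + ω 1 = ((√(1 - δ) - √δ : ℝ) : ℂ) := by simp [ω, sub_eq_add_neg]
    refine ⟨ω, ?_, ?_, ?_⟩
    · rw [← pow_eq_one_iff_of_nonneg (norm_nonneg ω) two_ne_zero, norm_sq_fin_two, hω₀, hω₁,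
        hsq₀, hsq₁]
      ring
    · rw [inner_e_zero_left, hω₀, hsq₀]
    · rw [norm_inner_hadamard_sq, hω, Complex.norm_real, Real.norm_eq_abs, sq_abs]
      ring
  · rintro _ ⟨ω, hunit, hsig, rfl⟩
    rw [inner_e_zero_left] at hsig
    have hcoord : ‖ω 0‖ ^ 2 + ‖ω 1‖ ^ 2 = 1 := by rw [← norm_sq_fin_two, hunit, one_pow]
    have hgap : 0 ≤ √(1 - δ) - √δ := sub_nonneg.2 (Real.sqrt_le_sqrt (by linarith))
    have hbound := pow_le_pow_left₀ hgap (sqrt_sub_sqrt_le_norm_add hcoord hsig) 2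
    rw [norm_inner_hadamard_sq]
    linarith
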